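/- Suppose each bad event B has P_Ω(B) ≤ p, each bad event is dependent with at most d events (including itself), and e·p·d ≤ 1 (the symmetric LLL criterion). Then W' = Σ_{B∈𝓑} (1/P_Ω(B)) Σ_{τ∈Γ(B)} w(τ) ≤ m·e, where m is the number of bad events. -/

import Mathlib

/-!
Let the depth of a node be the length of a longest path from it to a sink. A witness DAG with
single sink `b` is then determined up to isomorphism by its layers `L₀ = {b}, L₁, …, L_h` of nodes
of equal depth: label and depth determine a node, and two nodes are joined iff their labels are
dependent, the edge pointing to the smaller depth. Each `L_{i+1}` is a nonempty subset of the
neighbourhood of `L_i`, and the weight of the DAG is `P(b) ∏_{i ≥ 1} ∏_{B ∈ L_i} P(B)`.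
Summing over the choices of one layer after the other: if `∏_{B' ~ B} (1 + P(B') c(B')) ≤ c(B)`
for every `B`, the layer sequences grown from a set `I` have total weight at most `∏_{B ∈ I} c(B)`.
Under `e p d ≤ 1` the constant `c = e` qualifies, as `(1 + p e)^d ≤ exp (p e d) ≤ e`, so every `B`
contributes at most `e` to `W'`.
-/

open scoped BigOperators ENNReal Classical

namespace LLL

/-- Two bad events are dependent iff their variable sets intersect. -/
def Dep {n : ℕ} {E : Type} (S : E → Finset (Fin n)) (b b' : E) : Prop :=
  (S b ∩ S b').Nonempty

/-- A witness DAG: a finite DAG with nodes labeled by bad events, where any two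
nodes with dependent labels are joined by an edge (in one direction), and nodes
with non-dependent labels have no edge. -/
structure WDag (n : ℕ) (E : Type) (S : E → Finset (Fin n)) where
  size : ℕ
  label : Fin size → E
  edge : Fin size → Fin size → Prop
  acyclic : ∀ v, ¬ Relation.TransGen edge v v
  edge_dep : ∀ v w, edge v w → Dep S (label v) (label w)
  dep_edge : ∀ v w, v ≠ w → Dep S (label v) (label w) → edge v w ∨ edge w v

namespace WDag

variable {n : ℕ} {E : Type} {S : E → Finset (Fin n)}

/-- Isomorphism of witness DAGs. -/
def Iso (G G' : WDag n E S) : Prop :=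
  ∃ e : Fin G.size ≃ Fin G'.size,
    (∀ v, G'.label (e v) = G.label v) ∧ ∀ v w, G'.edge (e v) (e w) ↔ G.edge v w

theorem Iso.refl (G : WDag n E S) : Iso G G :=
  ⟨Equiv.refl _, fun _ => rfl, fun _ _ => Iff.rfl⟩

theorem Iso.symm {G G' : WDag n E S} (h : Iso G G') : Iso G' G := by
  obtain ⟨e, hl, he⟩ := h
  refine ⟨e.symm, fun v => ?_, fun v w => ?_⟩
  · simpa using (hl (e.symm v)).symm
  · simpa using (he (e.symm v) (e.symm w)).symm

theorem Iso.trans {G₁ G₂ G₃ : WDag n E S} (h12 : Iso G₁ G₂) (h23 : Iso G₂ G₃) :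
    Iso G₁ G₃ := by
  obtain ⟨e, hl, he⟩ := h12
  obtain ⟨f, hl', he'⟩ := h23
  refine ⟨e.trans f, fun v => ?_, fun v w => ?_⟩
  · rw [Equiv.trans_apply, hl' (e v), hl v]
  · rw [Equiv.trans_apply, Equiv.trans_apply, he' (e v) (e w), he v w]

instance wdSetoid (n : ℕ) (E : Type) (S : E → Finset (Fin n)) : Setoid (WDag n E S) :=
  ⟨Iso, ⟨Iso.refl, Iso.symm, Iso.trans⟩⟩

/-- Isomorphism classes of witness DAGs. -/
def WClass (n : ℕ) (E : Type) (S : E → Finset (Fin n)) : Type :=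
  Quotient (wdSetoid n E S)

/-- The weight of a witness DAG: the product of the probabilities of its labels. -/
noncomputable def wt (P : E → ℝ) (G : WDag n E S) : ℝ := ∏ v, P (G.label v)

theorem wt_invariant (P : E → ℝ) {G G' : WDag n E S} (h : Iso G G') :
    wt P G = wt P G' := by
  obtain ⟨e, hl, _⟩ := h
  exact Fintype.prod_equiv e (fun v => P (G.label v)) (fun v => P (G'.label v))
    (fun v => by show P (G.label v) = P (G'.label (e v)); rw [hl v])

/-- The weight, as a function on isomorphism classes. -/
noncomputable def cwt (P : E → ℝ) : WClass n E S → ℝ :=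
  Quotient.lift (wt P) fun _ _ h => wt_invariant P h

theorem size_invariant {G G' : WDag n E S} (h : Iso G G') : G.size = G'.size := by
  obtain ⟨e, -, -⟩ := h
  simpa using Fintype.card_congr e

/-- The adjusted weight `a_ρ(G) = w(G) (1+ρ)^{|G|}`. -/
noncomputable def awt (P : E → ℝ) (ρ : ℝ) (G : WDag n E S) : ℝ :=
  wt P G * (1 + ρ) ^ G.size

theorem awt_invariant (P : E → ℝ) (ρ : ℝ) {G G' : WDag n E S} (h : Iso G G') :
    awt P ρ G = awt P ρ G' := by
  unfold awt
  rw [wt_invariant P h, size_invariant h]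

/-- The adjusted weight, as a function on isomorphism classes. -/
noncomputable def cawt (P : E → ℝ) (ρ : ℝ) : WClass n E S → ℝ :=
  Quotient.lift (awt P ρ) fun _ _ h => awt_invariant P ρ h

/-- A node is a sink if it has no outgoing edge. -/
def IsSink (G : WDag n E S) (v : Fin G.size) : Prop := ∀ w, ¬ G.edge v w

/-- A witness DAG has a single sink. -/
def SingleSink (G : WDag n E S) : Prop := ∃! v, IsSink G v

/-- A witness DAG has a single sink, labeled by `b`. -/
def SinkLabeled (G : WDag n E S) (b : E) : Prop :=
  ∃ v, IsSink G v ∧ G.label v = b ∧ ∀ w, IsSink G w → w = v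

end WDag

/-- A set of bad events is independent if no two distinct members are dependent. -/
def Indep {n : ℕ} {E : Type} (S : E → Finset (Fin n)) (I : Finset E) : Prop :=
  ∀ b ∈ I, ∀ b' ∈ I, b ≠ b' → ¬ Dep S b b'

/-- The independent-set polynomial `Q(I,p)`. -/
noncomputable def Q {n : ℕ} {E : Type} [Fintype E] (S : E → Finset (Fin n))
    (p : E → ℝ) (I : Finset E) : ℝ :=
  ∑ J ∈ Finset.univ.filter (fun J : Finset E => I ⊆ J ∧ Indep S J),
    (-1 : ℝ) ^ (J.card - I.card) * ∏ b ∈ J, p b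

/-- The Shearer criterion for the probability vector `p`. -/
def Shearer {n : ℕ} {E : Type} [Fintype E] (S : E → Finset (Fin n)) (p : E → ℝ) : Prop :=
  0 < Q S p ∅ ∧ ∀ I : Finset E, Indep S I → 0 ≤ Q S p I

end LLL

theorem Finset.prod_biUnion_le_prod_prod {ι κ M : Type*} [DecidableEq ι] [CommMonoid M]
    [Preorder M] [MulLeftMono M] (s : Finset κ) (t : κ → Finset ι) {f : ι → M}
    (hf : ∀ i, 1 ≤ f i) : ∏ i ∈ s.biUnion t, f i ≤ ∏ a ∈ s, ∏ i ∈ t a, f i := by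
  induction s using Finset.induction_on with
  | empty => simp
  | insert a s ha ih =>
    rw [biUnion_insert, prod_insert ha]
    calc ∏ i ∈ t a ∪ s.biUnion t, f i
        ≤ (∏ i ∈ t a ∪ s.biUnion t, f i) * ∏ i ∈ t a ∩ s.biUnion t, f i :=
          le_mul_of_one_le_right' (one_le_prod'' hf)
      _ = (∏ i ∈ t a, f i) * ∏ i ∈ s.biUnion t, f i := prod_union_inter
      _ ≤ (∏ i ∈ t a, f i) * ∏ b ∈ s, ∏ i ∈ t b, f i := mul_le_mul_right ih _

namespace LLL

open Finset

theorem one_add_mul_exp_one_pow_le {p : ℝ} {d : ℕ} (hp : 0 ≤ p)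
    (h : Real.exp 1 * p * d ≤ 1) : (1 + p * Real.exp 1) ^ d ≤ Real.exp 1 :=
  calc (1 + p * Real.exp 1) ^ d ≤ Real.exp (p * Real.exp 1) ^ d := by
        gcongr
        linarith [Real.add_one_le_exp (p * Real.exp 1)]
    _ = Real.exp (d * (p * Real.exp 1)) := (Real.exp_nat_mul _ d).symm
    _ ≤ Real.exp 1 := Real.exp_le_exp.2 (by linarith)

variable {n : ℕ} {E : Type} {S : E → Finset (Fin n)}

theorem Dep.symm {b b' : E} (h : Dep S b b') : Dep S b' b := by
  rwa [Dep, inter_comm]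

theorem Dep.refl_left {b b' : E} (h : Dep S b b') : Dep S b b := by
  rw [Dep, inter_self]
  exact h.mono inter_subset_left

section LayerSeqs

variable [Fintype E] (S)

noncomputable def nbhd (I : Finset E) : Finset E :=
  I.biUnion fun b => univ.filter (Dep S b)

/-- The candidate layer sequences, of length at most `k`, of a witness DAG above a layer `I`. -/
noncomputable def layerSeqs : ℕ → Finset E → Finset (List (Finset E))
  | 0, _ => {[]}
  | k + 1, I =>
    insert [] (((nbhd S I).powerset.erase ∅).biUnion fun J => (layerSeqs k J).image (J :: ·))

noncomputable def seqWeight (x : E → ℝ≥0∞) (l : List (Finset E)) : ℝ≥0∞ :=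
  (l.map fun J => ∏ b ∈ J, x b).prod

variable {S}

theorem nil_mem_layerSeqs (k : ℕ) (I : Finset E) : [] ∈ layerSeqs S k I := by
  cases k <;> simp [layerSeqs]

theorem layerSeqs_mono {j k : ℕ} (h : j ≤ k) (I : Finset E) :
    layerSeqs S j I ⊆ layerSeqs S k I := by
  induction j generalizing k I with
  | zero => simpa [layerSeqs] using nil_mem_layerSeqs k I
  | succ j ih =>
    obtain ⟨k, rfl⟩ : ∃ k', k = k' + 1 := Nat.exists_eq_succ_of_ne_zero (by omega)
    exact insert_subset_insert _ <| biUnion_mono fun J _ =>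
      image_subset_image (ih (by omega) J)

theorem sum_layerSeqs_succ (x : E → ℝ≥0∞) (k : ℕ) (I : Finset E) :
    ∑ l ∈ layerSeqs S (k + 1) I, seqWeight x l =
      1 + ∑ J ∈ (nbhd S I).powerset.erase ∅,
        (∏ b ∈ J, x b) * ∑ l ∈ layerSeqs S k J, seqWeight x l := by
  rw [layerSeqs, sum_insert (by simp), sum_biUnion]
  · simp [seqWeight, sum_image, mul_sum]
  · intro J _ J' _ hne
    simp [Function.onFun, disjoint_left, hne.symm]

theorem sum_layerSeqs_le (x c : E → ℝ≥0∞)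
    (hc : ∀ b, ∏ b' ∈ univ.filter (Dep S b), (1 + x b' * c b') ≤ c b) (k : ℕ)
    (I : Finset E) : ∑ l ∈ layerSeqs S k I, seqWeight x l ≤ ∏ b ∈ I, c b := by
  induction k generalizing I with
  | zero =>
    simp only [layerSeqs, sum_singleton, seqWeight, List.map_nil, List.prod_nil]
    exact one_le_prod'' fun b => (one_le_prod'' fun _ => le_self_add).trans (hc b)
  | succ k ih =>
    calc ∑ l ∈ layerSeqs S (k + 1) I, seqWeight x l
        = 1 + ∑ J ∈ (nbhd S I).powerset.erase ∅,
            (∏ b ∈ J, x b) * ∑ l ∈ layerSeqs S k J, seqWeight x l :=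
          sum_layerSeqs_succ x k I
      _ ≤ 1 + ∑ J ∈ (nbhd S I).powerset.erase ∅, ∏ b ∈ J, x b * c b := by
          gcongr with J
          rw [prod_mul_distrib]
          gcongr
          exact ih J
      _ = ∏ b ∈ nbhd S I, (1 + x b * c b) := by
          rw [prod_one_add, ← sum_erase_add _ _ (empty_mem_powerset _), prod_empty, add_comm]
      _ ≤ ∏ b ∈ I, ∏ b' ∈ univ.filter (Dep S b), (1 + x b' * c b') :=
          prod_biUnion_le_prod_prod _ _ fun _ => le_self_add
      _ ≤ ∏ b ∈ I, c b := prod_le_prod' fun b _ => hc b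

end LayerSeqs

namespace WDag

variable (G : WDag n E S) {v w : Fin G.size}

theorem wellFounded_flip_edge : WellFounded (flip G.edge) := by
  have : Std.Irrefl (Relation.TransGen (flip G.edge)) :=
    ⟨fun v h => G.acyclic v (Relation.transGen_swap.1 h)⟩
  have : IsTrans (Fin G.size) (Relation.TransGen (flip G.edge)) :=
    ⟨fun _ _ _ => Relation.TransGen.trans⟩
  exact Subrelation.wf Relation.TransGen.single (Finite.wellFounded_of_trans_of_irrefl _)

noncomputable def depth : Fin G.size → ℕ :=
  G.wellFounded_flip_edge.fix fun v depth =>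
    univ.sup fun w : {w // G.edge v w} => depth w w.2 + 1

theorem depth_eq (v : Fin G.size) :
    G.depth v = univ.sup fun w : {w // G.edge v w} => G.depth w + 1 :=
  G.wellFounded_flip_edge.fix_eq _ v

variable {G}

theorem depth_lt_of_edge (h : G.edge v w) : G.depth w < G.depth v := by
  rw [G.depth_eq v]
  exact Nat.lt_of_succ_le
    (le_sup (f := fun w : {w // G.edge v w} => G.depth w + 1) (mem_univ ⟨w, h⟩))

theorem depth_eq_zero_iff : G.depth v = 0 ↔ G.IsSink v :=
  ⟨fun h _ hw => Nat.not_lt_zero _ (h ▸ depth_lt_of_edge hw),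
    fun h => Nat.le_zero.1 <| (G.depth_eq v).trans_le <|
      Finset.sup_le fun w _ => absurd w.2 (h w)⟩

theorem exists_edge_depth_eq {k : ℕ} (h : G.depth v = k + 1) :
    ∃ w, G.edge v w ∧ G.depth w = k := by
  by_contra! hne
  have : G.depth v ≤ k := (G.depth_eq v).trans_le <| Finset.sup_le fun w _ => by
    have := depth_lt_of_edge w.2
    have := hne w w.2
    omega
  omega

theorem exists_depth_eq_of_le {i : ℕ} :
    ∀ {k : ℕ} {v : Fin G.size}, G.depth v = k → i ≤ k → ∃ w, G.depth w = i
  | 0, v, hv, hi => ⟨v, by omega⟩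
  | k + 1, v, hv, hi => by
    obtain rfl | hi := Nat.eq_or_lt_of_le hi
    · exact ⟨v, hv⟩
    · obtain ⟨w, -, hw⟩ := exists_edge_depth_eq hv
      exact exists_depth_eq_of_le hw (by omega)

theorem edge_iff : G.edge v w ↔ Dep S (G.label v) (G.label w) ∧ G.depth w < G.depth v := by
  refine ⟨fun h => ⟨G.edge_dep v w h, depth_lt_of_edge h⟩, fun ⟨hdep, hlt⟩ => ?_⟩
  have hne : v ≠ w := by rintro rfl; exact lt_irrefl _ hlt
  exact (G.dep_edge v w hne hdep).resolve_right fun h => lt_asymm hlt (depth_lt_of_edge h)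

theorem isSink_of_not_dep_self (h : ¬ Dep S (G.label v) (G.label v)) : G.IsSink v :=
  fun w hw => h (G.edge_dep v w hw).refl_left

noncomputable def labelDepth (G : WDag n E S) (v : Fin G.size) : E × ℕ := (G.label v, G.depth v)

/-- Two nodes with equal labels are joined by an edge, unless the label depends on no variable,
in which case both nodes are sinks. -/
theorem SingleSink.labelDepth_injective (hG : G.SingleSink) :
    Function.Injective G.labelDepth := by
  intro v w hvw
  obtain ⟨hl, hd⟩ := Prod.mk.inj hvw
  by_contra hne
  by_cases hdep : Dep S (G.label v) (G.label v)
  · rcases G.dep_edge v w hne (by rwa [← hl]) with h | h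
    · exact (depth_lt_of_edge h).ne hd.symm
    · exact (depth_lt_of_edge h).ne hd
  · exact hne (hG.unique (isSink_of_not_dep_self hdep) (isSink_of_not_dep_self (hl ▸ hdep)))

theorem iso_of_range_labelDepth_eq {G G' : WDag n E S} (hG : G.SingleSink)
    (hG' : G'.SingleSink) (h : Set.range G.labelDepth = Set.range G'.labelDepth) : Iso G G' := by
  let e := (Equiv.ofInjective _ hG.labelDepth_injective).trans
    ((Equiv.setCongr h).trans (Equiv.ofInjective _ hG'.labelDepth_injective).symm)
  have he v : G'.labelDepth (e v) = G.labelDepth v := by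
    simp [e, Equiv.apply_ofInjective_symm]
  have hl v : G'.label (e v) = G.label v := congrArg Prod.fst (he v)
  have hd v : G'.depth (e v) = G.depth v := congrArg Prod.snd (he v)
  refine ⟨e, hl, fun v w => ?_⟩
  rw [edge_iff, edge_iff, hl, hl, hd, hd]

noncomputable def layer (G : WDag n E S) (i : ℕ) : Finset E :=
  (univ.filter fun v => G.depth v = i).image G.label

noncomputable def height (G : WDag n E S) : ℕ := univ.sup G.depth

noncomputable def upperLayers (G : WDag n E S) : List (Finset E) :=
  (List.range' 1 G.height).map G.layer

theorem mem_layer {i : ℕ} {b : E} : b ∈ G.layer i ↔ ∃ v, G.depth v = i ∧ G.label v = b := by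
  simp [layer]

theorem mem_range_labelDepth {b : E} {i : ℕ} :
    (b, i) ∈ Set.range G.labelDepth ↔ b ∈ G.layer i := by
  simp [labelDepth, mem_layer, and_comm]

theorem depth_le_height (v : Fin G.size) : G.depth v ≤ G.height := le_sup (mem_univ v)

theorem layer_eq_empty {i : ℕ} (h : G.height < i) : G.layer i = ∅ :=
  eq_empty_of_forall_notMem fun b hb => by
    obtain ⟨v, hv, -⟩ := mem_layer.1 hb
    have := G.depth_le_height v
    omega

theorem layer_nonempty [Nonempty (Fin G.size)] {i : ℕ} (hi : i ≤ G.height) :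
    (G.layer i).Nonempty := by
  obtain ⟨v, -, hv⟩ := exists_mem_eq_sup univ univ_nonempty G.depth
  obtain ⟨w, hw⟩ := exists_depth_eq_of_le hv.symm hi
  exact ⟨G.label w, mem_layer.2 ⟨w, hw, rfl⟩⟩

theorem getD_upperLayers (i : ℕ) : G.upperLayers.getD i ∅ = G.layer (i + 1) := by
  rcases lt_or_ge i G.height with hi | hi
  · simp [upperLayers, hi, add_comm]
  · simp [upperLayers, hi, G.layer_eq_empty (Nat.lt_succ_of_le hi)]

theorem SingleSink.prod_label_eq {M : Type*} [CommMonoid M] (hG : G.SingleSink) (x : E → M) :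
    ∏ v, x (G.label v) = ∏ i ∈ range (G.height + 1), ∏ b ∈ G.layer i, x b := by
  rw [← prod_fiberwise_of_maps_to fun v _ =>
    mem_range.2 (Nat.lt_succ_of_le (G.depth_le_height v))]
  refine prod_congr rfl fun i _ => (prod_image fun v hv w hw hvw => ?_).symm
  simp only [coe_filter, Set.mem_ofPred_eq, mem_univ, true_and] at hv hw
  exact hG.labelDepth_injective (Prod.ext hvw (hv.trans hw.symm))

theorem seqWeight_upperLayers (x : E → ℝ≥0∞) :
    seqWeight x G.upperLayers = ∏ i ∈ range G.height, ∏ b ∈ G.layer (i + 1), x b := by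
  rw [seqWeight, upperLayers, List.range'_eq_map_range, List.map_map, List.map_map,
    ← List.prod_toFinset _ List.nodup_range, List.toFinset_range]
  simp only [Function.comp_def, add_comm]

theorem SinkLabeled.singleSink {b : E} (hG : G.SinkLabeled b) : G.SingleSink :=
  let ⟨v, hv, _, hu⟩ := hG
  ⟨v, hv, hu⟩

theorem SinkLabeled.layer_zero {b : E} (hG : G.SinkLabeled b) : G.layer 0 = {b} := by
  obtain ⟨v, hv, rfl, hu⟩ := hG
  ext b'
  simp only [mem_layer, depth_eq_zero_iff, mem_singleton]
  exact ⟨fun ⟨w, hw, hwb⟩ => hwb ▸ congrArg G.label (hu w hw), fun h => ⟨v, hv, h.symm⟩⟩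

theorem SinkLabeled.ofReal_wt {P : E → ℝ} (hP : ∀ b, 0 ≤ P b) {b : E} (hG : G.SinkLabeled b) :
    ENNReal.ofReal (wt P G) =
      ENNReal.ofReal (P b) * seqWeight (fun b => ENNReal.ofReal (P b)) G.upperLayers := by
  rw [wt, ENNReal.ofReal_prod_of_nonneg fun v _ => hP _,
    hG.singleSink.prod_label_eq fun b => ENNReal.ofReal (P b), prod_range_succ', hG.layer_zero,
    prod_singleton, mul_comm, seqWeight_upperLayers]

theorem iso_of_upperLayers_eq {G G' : WDag n E S} {b : E} (hG : G.SinkLabeled b)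
    (hG' : G'.SinkLabeled b) (h : G.upperLayers = G'.upperLayers) : Iso G G' := by
  have hlayer : ∀ i, G.layer i = G'.layer i
    | 0 => by rw [hG.layer_zero, hG'.layer_zero]
    | i + 1 => by rw [← getD_upperLayers, h, getD_upperLayers]
  refine iso_of_range_labelDepth_eq hG.singleSink hG'.singleSink (Set.ext fun ⟨b, i⟩ => ?_)
  rw [mem_range_labelDepth, mem_range_labelDepth, hlayer]

section Fintype

variable [Fintype E]

theorem layer_succ_subset_nbhd (i : ℕ) : G.layer (i + 1) ⊆ nbhd S (G.layer i) := by
  intro b' hb'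
  obtain ⟨v, hv, rfl⟩ := mem_layer.1 hb'
  obtain ⟨w, hvw, hw⟩ := exists_edge_depth_eq hv
  simp only [nbhd, mem_biUnion, mem_filter, mem_univ, true_and]
  exact ⟨G.label w, mem_layer.2 ⟨w, hw, rfl⟩, (G.edge_dep v w hvw).symm⟩

theorem map_layer_range'_mem_layerSeqs [Nonempty (Fin G.size)] :
    ∀ {m j : ℕ}, j + m ≤ G.height →
      (List.range' (j + 1) m).map G.layer ∈ layerSeqs S m (G.layer j)
  | 0, _, _ => mem_singleton_self _
  | m + 1, j, h => by
    rw [List.range'_succ, List.map_cons]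
    refine mem_insert_of_mem (mem_biUnion.2 ⟨G.layer (j + 1), ?_,
      mem_image_of_mem _ (map_layer_range'_mem_layerSeqs (by omega))⟩)
    exact mem_erase.2
      ⟨(G.layer_nonempty (by omega)).ne_empty, mem_powerset.2 (G.layer_succ_subset_nbhd j)⟩

theorem SinkLabeled.upperLayers_mem_layerSeqs {b : E} (hG : G.SinkLabeled b) :
    G.upperLayers ∈ layerSeqs S G.height {b} := by
  have : Nonempty (Fin G.size) := let ⟨v, _⟩ := hG; ⟨v⟩
  rw [← hG.layer_zero]
  exact map_layer_range'_mem_layerSeqs (by omega)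

end Fintype

end WDag

open WDag

/-- The paper's `Γ(b)`. -/
abbrev SinkClasses (S : E → Finset (Fin n)) (b : E) : Type :=
  {c : WClass n E S // ∃ G : WDag n E S, Quotient.mk (wdSetoid n E S) G = c ∧ SinkLabeled G b}

section Fintype

variable [Fintype E]

theorem tsum_sinkClasses_le {P : E → ℝ} (hP : ∀ b, 0 ≤ P b) (c : E → ℝ≥0∞)
    (hc : ∀ b, ∏ b' ∈ univ.filter (Dep S b), (1 + ENNReal.ofReal (P b') * c b') ≤ c b)
    (b : E) : ∑' τ : SinkClasses S b, ENNReal.ofReal (cwt P τ.1) ≤ ENNReal.ofReal (P b) * c b := by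
  choose G hGτ hG using fun τ : SinkClasses S b => τ.2
  have hinj : Function.Injective fun τ => (G τ).upperLayers := fun τ τ' h =>
    Subtype.ext <| (hGτ τ).symm.trans <|
      (Quotient.sound (iso_of_upperLayers_eq (hG τ) (hG τ') h)).trans (hGτ τ')
  set x : E → ℝ≥0∞ := fun b => ENNReal.ofReal (P b)
  calc ∑' τ : SinkClasses S b, ENNReal.ofReal (cwt P τ.1)
      = ∑' τ, x b * seqWeight x (G τ).upperLayers :=
        tsum_congr fun τ => by rw [← hGτ τ]; exact (hG τ).ofReal_wt hP
    _ = x b * ∑' τ, seqWeight x (G τ).upperLayers := ENNReal.tsum_mul_left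
    _ ≤ x b * c b := by
      gcongr
      refine ENNReal.summable.tsum_le_of_sum_le fun s => ?_
      calc ∑ τ ∈ s, seqWeight x (G τ).upperLayers
          = ∑ l ∈ s.image fun τ => (G τ).upperLayers, seqWeight x l :=
            (sum_image fun τ _ τ' _ h => hinj h).symm
        _ ≤ ∑ l ∈ layerSeqs S (s.sup fun τ => (G τ).height) {b}, seqWeight x l :=
            sum_le_sum_of_subset <| image_subset_iff.2 fun τ hτ =>
              layerSeqs_mono (le_sup hτ) _ (hG τ).upperLayers_mem_layerSeqs
        _ ≤ c b := (sum_layerSeqs_le x c hc _ {b}).trans_eq (prod_singleton _ _)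

theorem prod_dep_one_add_mul_exp_one_le {P : E → ℝ} {p : ℝ} {d : ℕ} (hP0 : ∀ b, 0 ≤ P b)
    (hp : ∀ b, P b ≤ p) (hdep : ∀ b : E, (univ.filter fun b' => Dep S b b').card ≤ d)
    (hlll : Real.exp 1 * p * d ≤ 1) (b : E) :
    ∏ b' ∈ univ.filter (Dep S b), (1 + ENNReal.ofReal (P b') * ENNReal.ofReal (Real.exp 1)) ≤
      ENNReal.ofReal (Real.exp 1) := by
  have hp0 : 0 ≤ p := (hP0 b).trans (hp b)
  have hpe : 0 ≤ p * Real.exp 1 := by positivity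
  calc ∏ b' ∈ univ.filter (Dep S b), (1 + ENNReal.ofReal (P b') * ENNReal.ofReal (Real.exp 1))
      ≤ ∏ _b' ∈ univ.filter (Dep S b), ENNReal.ofReal (1 + p * Real.exp 1) :=
        prod_le_prod' fun b' _ => by
          rw [← ENNReal.ofReal_mul (hP0 b'), ← ENNReal.ofReal_one,
            ← ENNReal.ofReal_add zero_le_one (mul_nonneg (hP0 b') (Real.exp_pos 1).le)]
          gcongr
          exact hp b'
    _ = ENNReal.ofReal (1 + p * Real.exp 1) ^ (univ.filter (Dep S b)).card := prod_const _
    _ ≤ ENNReal.ofReal (1 + p * Real.exp 1) ^ d :=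
        pow_le_pow_right₀ (ENNReal.one_le_ofReal.2 (le_add_of_nonneg_right hpe)) (hdep b)
    _ = ENNReal.ofReal ((1 + p * Real.exp 1) ^ d) := (ENNReal.ofReal_pow (by positivity) d).symm
    _ ≤ ENNReal.ofReal (Real.exp 1) :=
        ENNReal.ofReal_le_ofReal (one_add_mul_exp_one_pow_le hp0 hlll)

end Fintype

theorem stmt9_general {n : ℕ} {E : Type} [Fintype E] (S : E → Finset (Fin n)) (P : E → ℝ)
    (hP0 : ∀ b, 0 ≤ P b)
    (p : ℝ) (d : ℕ) (hp : ∀ b, P b ≤ p)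
    (hdep : ∀ b : E, (Finset.univ.filter fun b' => Dep S b b').card ≤ d)
    (hlll : Real.exp 1 * p * d ≤ 1) :
    ∑ b : E, ENNReal.ofReal (P b)⁻¹ *
        ∑' τ : {c : WDag.WClass n E S //
          ∃ G : WDag n E S, Quotient.mk (WDag.wdSetoid n E S) G = c ∧ WDag.SinkLabeled G b},
          ENNReal.ofReal (WDag.cwt P τ.1)
      ≤ ENNReal.ofReal ((Fintype.card E : ℝ) * Real.exp 1) := by
  have hc := prod_dep_one_add_mul_exp_one_le (S := S) hP0 hp hdep hlll
  calc _ ≤ ∑ _b : E, ENNReal.ofReal (Real.exp 1) := sum_le_sum fun b _ => by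
        grw [tsum_sinkClasses_le hP0 _ hc b, ← mul_assoc,
          ← ENNReal.ofReal_mul (inv_nonneg.2 (hP0 b))]
        exact mul_le_of_le_one_left' (ENNReal.ofReal_le_one.2 inv_mul_le_one)
    _ = _ := by
      rw [sum_const, card_univ, nsmul_eq_mul, ENNReal.ofReal_mul (Nat.cast_nonneg _),
        ENNReal.ofReal_natCast]

/-- Under the symmetric LLL criterion e·p·d ≤ 1, the parameter
W' = Σ_B (1/P(B)) Σ_{τ ∈ Γ(B)} w(τ) is at most m·e. -/
theorem stmt9 {n : ℕ} {E : Type} [Fintype E] (S : E → Finset (Fin n)) (P : E → ℝ)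
    (hP0 : ∀ b, 0 ≤ P b) (hP1 : ∀ b, P b ≤ 1)
    (p : ℝ) (d : ℕ) (hp : ∀ b, P b ≤ p)
    (hdep : ∀ b : E, (Finset.univ.filter fun b' => Dep S b b').card ≤ d)
    (hlll : Real.exp 1 * p * d ≤ 1) :
    ∑ b : E, ENNReal.ofReal (P b)⁻¹ *
        ∑' τ : {c : WDag.WClass n E S //
          ∃ G : WDag n E S, Quotient.mk (WDag.wdSetoid n E S) G = c ∧ WDag.SinkLabeled G b},
          ENNReal.ofReal (WDag.cwt P τ.1)
      ≤ ENNReal.ofReal ((Fintype.card E : ℝ) * Real.exp 1) :=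
  stmt9_general S P hP0 p d hp hdep hlll

end LLL
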